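/- arXiv:1308.1421 — 5 statements merged into one kernel-verified Lean document; each statement's English description precedes it below -/
import Mathlib

section
/- For nonnegative integers k, l, m with l ≥ k and m < k, the eigenfrequencies ω_{k,l} = π√(k²+l²) satisfy |ω_{k,l} − ω_{k,m}| ≥ π|l−m|/(2√2). -/
/-!
With `a = √(k² + x²)` and `b = √(k² + y²)`, `(a - b)(a + b) = x² - y²`, and `k ≤ x` gives
`a + b ≤ 2a ≤ 2√2 x`; hence `a - b ≥ (x - y)(x + y) / (2√2 x) ≥ (x - y) / (2√2)`.
-/

/-- Eigenfrequencies of the Neumann Laplacian on the unit square. -/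
noncomputable def ω (k l : ℕ) : ℝ := Real.pi * Real.sqrt ((k : ℝ)^2 + (l : ℝ)^2)

open Real

lemma sqrt_sq_add_sq_le_sqrt_two_mul {k x : ℝ} (hx : 0 ≤ x) (hk : k ^ 2 ≤ x ^ 2) :
    √(k ^ 2 + x ^ 2) ≤ √2 * x := by
  calc √(k ^ 2 + x ^ 2) ≤ √(2 * x ^ 2) := sqrt_le_sqrt (by linarith)
    _ = √2 * x := by rw [sqrt_mul zero_le_two, sqrt_sq hx]

lemma div_two_sqrt_two_le_sqrt_sub_sqrt {k x y : ℝ} (hy : 0 ≤ y) (hyx : y ≤ x)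
    (hk : k ^ 2 ≤ x ^ 2) :
    (x - y) / (2 * √2) ≤ √(k ^ 2 + x ^ 2) - √(k ^ 2 + y ^ 2) := by
  set a := √(k ^ 2 + x ^ 2)
  set b := √(k ^ 2 + y ^ 2)
  have ha : a ^ 2 = k ^ 2 + x ^ 2 := sq_sqrt (by positivity)
  have hb : b ^ 2 = k ^ 2 + y ^ 2 := sq_sqrt (by positivity)
  have hba : b ≤ a := sqrt_le_sqrt (by nlinarith)
  have hxa : x ≤ a := le_sqrt_of_sq_le (by nlinarith)
  have haX : a ≤ √2 * x := sqrt_sq_add_sq_le_sqrt_two_mul (hy.trans hyx) hk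
  have key : (x - y) * x ≤ (a - b) * (2 * √2) * x := by
    nlinarith [sqrt_nonneg (k ^ 2 + y ^ 2)]
  rw [div_le_iff₀ (by positivity)]
  rcases (hy.trans hyx).eq_or_lt with hx0 | hx0
  · subst hx0
    obtain rfl : y = 0 := le_antisymm hyx hy
    simpa using hba
  · exact le_of_mul_le_mul_right key hx0

lemma abs_sub_div_two_sqrt_two_le_abs_sqrt_sub_sqrt {k x y : ℝ} (hx : 0 ≤ x) (hy : 0 ≤ y)
    (hk : k ^ 2 ≤ max x y ^ 2) :
    |x - y| / (2 * √2) ≤ |√(k ^ 2 + x ^ 2) - √(k ^ 2 + y ^ 2)| := by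
  wlog hyx : y ≤ x generalizing x y
  · rw [abs_sub_comm, abs_sub_comm (√_)]
    exact this hy hx (by rwa [max_comm]) (le_of_not_ge hyx)
  rw [max_eq_left hyx] at hk
  rw [abs_of_nonneg (sub_nonneg.2 hyx)]
  exact (div_two_sqrt_two_le_sqrt_sub_sqrt hy hyx hk).trans (le_abs_self _)

theorem stmt_1_general (k l m : ℕ) (hlk : l ≥ k) :
    |ω k l - ω k m| ≥ Real.pi * |(l : ℝ) - (m : ℝ)| / (2 * Real.sqrt 2) := by
  have hk : (k : ℝ) ^ 2 ≤ max (l : ℝ) m ^ 2 := by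
    gcongr
    exact le_max_of_le_left (by exact_mod_cast hlk)
  simp only [ω, ← mul_sub, abs_mul, abs_of_pos pi_pos, mul_div_assoc, ge_iff_le]
  gcongr
  exact abs_sub_div_two_sqrt_two_le_abs_sqrt_sub_sqrt (Nat.cast_nonneg _) (Nat.cast_nonneg _) hk

theorem stmt_1 (k l m : ℕ) (hlk : l ≥ k) (hmk : m < k) :
    |ω k l - ω k m| ≥ Real.pi * |(l : ℝ) - (m : ℝ)| / (2 * Real.sqrt 2) :=
  stmt_1_general k l m hlk
end

section
/- For nonnegative integers k, l, n, m with l ≥ k, l ≥ n, and m ≥ l, the 3D eigenfrequencies ω_{k,l,n} = π√(k²+l²+n²) satisfy |ω_{k,l,n} − ω_{k,m,n}| ≥ π|l−m|/√3. -/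
/-
Write `a = √(k² + l² + n²)` and `b = √(k² + m² + n²)`. Then `(b - a)(b + a) = m² - l²`, and since
`k, n ≤ l ≤ m` we have `a ≤ √3 l` and `b ≤ √3 m`, so `b + a ≤ √3 (l + m)`. Dividing by `l + m`
gives `b - a ≥ (m - l) / √3`.
-/

/-- Eigenfrequencies of the Neumann Laplacian on the unit cube. -/
noncomputable def ω3 (k l n : ℕ) : ℝ :=
  Real.pi * Real.sqrt ((k : ℝ)^2 + (l : ℝ)^2 + (n : ℝ)^2)

open Real

lemma sub_le_mul_sqrt_sub_sqrt {A B C : ℝ} (hA : 0 ≤ A) (hAB : A ≤ B) (hC : √A + √B ≤ C) :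
    B - A ≤ C * (√B - √A) := by
  have hdiff : 0 ≤ √B - √A := sub_nonneg.mpr (sqrt_le_sqrt hAB)
  calc B - A = (√B + √A) * (√B - √A) := by
        rw [← sq_sub_sq, sq_sqrt (hA.trans hAB), sq_sqrt hA]
    _ ≤ C * (√B - √A) := mul_le_mul_of_nonneg_right (by linarith) hdiff

lemma sqrt_sq_add_sq_add_sq_le {k l n : ℝ} (hl : 0 ≤ l) (hk : k ^ 2 ≤ l ^ 2) (hn : n ^ 2 ≤ l ^ 2) :
    √(k ^ 2 + l ^ 2 + n ^ 2) ≤ √3 * l := by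
  calc √(k ^ 2 + l ^ 2 + n ^ 2) ≤ √(3 * l ^ 2) := sqrt_le_sqrt (by linarith)
    _ = √3 * l := by rw [sqrt_mul zero_le_three, sqrt_sq hl]

lemma sub_le_sqrt_three_mul_sqrt_sub_sqrt {k l n m : ℝ} (hk0 : 0 ≤ k) (hn0 : 0 ≤ n)
    (hlk : k ≤ l) (hln : n ≤ l) (hml : l ≤ m) :
    m - l ≤ √3 * (√(k ^ 2 + m ^ 2 + n ^ 2) - √(k ^ 2 + l ^ 2 + n ^ 2)) := by
  have hl : 0 ≤ l := hk0.trans hlk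
  have hsum : √(k ^ 2 + l ^ 2 + n ^ 2) + √(k ^ 2 + m ^ 2 + n ^ 2) ≤ √3 * (l + m) := by
    have ha := sqrt_sq_add_sq_add_sq_le hl (pow_le_pow_left₀ hk0 hlk 2) (pow_le_pow_left₀ hn0 hln 2)
    have hb := sqrt_sq_add_sq_add_sq_le (hl.trans hml) (pow_le_pow_left₀ hk0 (hlk.trans hml) 2)
      (pow_le_pow_left₀ hn0 (hln.trans hml) 2)
    linarith
  have h := sub_le_mul_sqrt_sub_sqrt (by positivity) (by gcongr) hsum
  rcases hml.eq_or_lt with rfl | hlt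
  · simp
  · have hpos : 0 < l + m := by linarith
    refine le_of_mul_le_mul_left ?_ hpos
    linear_combination h

lemma abs_ω3_sub_ω3 (k l n m : ℕ) (hml : l ≤ m) :
    |ω3 k l n - ω3 k m n| = π * (√((k : ℝ) ^ 2 + (m : ℝ) ^ 2 + (n : ℝ) ^ 2)
      - √((k : ℝ) ^ 2 + (l : ℝ) ^ 2 + (n : ℝ) ^ 2)) := by
  have hle : ω3 k l n ≤ ω3 k m n := by unfold ω3; gcongr
  rw [abs_sub_comm, abs_of_nonneg (sub_nonneg.mpr hle), ω3, ω3, mul_sub]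

theorem stmt_3 (k l n m : ℕ) (hlk : l ≥ k) (hln : l ≥ n) (hml : m ≥ l) :
    |ω3 k l n - ω3 k m n| ≥ Real.pi * |(l : ℝ) - (m : ℝ)| / Real.sqrt 3 := by
  have hml' : (l : ℝ) ≤ m := by exact_mod_cast hml
  have key := sub_le_sqrt_three_mul_sqrt_sub_sqrt (Nat.cast_nonneg k) (Nat.cast_nonneg n)
    (Nat.cast_le.mpr hlk) (Nat.cast_le.mpr hln) hml'
  rw [abs_ω3_sub_ω3 k l n m hml, abs_sub_comm, abs_of_nonneg (sub_nonneg.mpr hml'), ge_iff_le,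
    div_le_iff₀ (by positivity), mul_assoc, mul_comm _ √3]
  exact mul_le_mul_of_nonneg_left key pi_pos.le
end

section
/- For all nonnegative integers k, l, n, m with l ≥ k and l ≥ n, the 3D eigenfrequencies satisfy |ω_{k,l,n} − ω_{k,m,n}| ≥ π|l−m|/(2√3). -/
/-!
Write `a = √(c + l²)` and `b = √(c + m²)` with `c = k² + n²`. Rationalising,
`|a - b| (a + b) = |l - m| (l + m)`, and since `c ≤ 2 l²` both `a` and `b` are at most
`√3 (l + m)`. Dividing by `l + m` gives `|a - b| ≥ |l - m| / (2√3)`.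
-/

open Real

lemma abs_sqrt_sub_sqrt_mul_sqrt_add_sqrt {s t : ℝ} (hs : 0 ≤ s) (ht : 0 ≤ t) :
    |√s - √t| * (√s + √t) = |s - t| := by
  have hsum : 0 ≤ √s + √t := by positivity
  rw [← abs_of_nonneg hsum, ← abs_mul, mul_comm, ← sq_sub_sq, sq_sqrt hs, sq_sqrt ht]

lemma sqrt_add_sq_le_sqrt_three_mul {c x z : ℝ} (hz : 0 ≤ z) (hc : c ≤ 2 * z ^ 2)
    (hx : x ^ 2 ≤ z ^ 2) : √(c + x ^ 2) ≤ √3 * z := by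
  rw [sqrt_le_iff, mul_pow, sq_sqrt (by norm_num : (0 : ℝ) ≤ 3)]
  exact ⟨by positivity, by linarith⟩

lemma abs_sub_div_le_abs_sqrt_add_sq_sub {c x y : ℝ} (hc₀ : 0 ≤ c) (hx : 0 ≤ x) (hy : 0 ≤ y)
    (hc : c ≤ 2 * (x + y) ^ 2) :
    |x - y| / (2 * √3) ≤ |√(c + x ^ 2) - √(c + y ^ 2)| := by
  set a := √(c + x ^ 2)
  set b := √(c + y ^ 2)
  have hprod : |a - b| * (a + b) = |x - y| * (x + y) := by
    rw [abs_sqrt_sub_sqrt_mul_sqrt_add_sqrt (by positivity) (by positivity),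
      add_sub_add_left_eq_sub, sq_sub_sq, abs_mul, abs_of_nonneg (add_nonneg hx hy), mul_comm (x + y)]
  have hsum : a + b ≤ 2 * √3 * (x + y) := by
    have ha : a ≤ √3 * (x + y) := sqrt_add_sq_le_sqrt_three_mul (by positivity) hc (by nlinarith)
    have hb : b ≤ √3 * (x + y) := sqrt_add_sq_le_sqrt_three_mul (by positivity) hc (by nlinarith)
    linarith
  rcases (add_nonneg hx hy).eq_or_lt with hxy | hxy
  · have hx0 : x = 0 := by linarith
    have hy0 : y = 0 := by linarith
    simp [hx0, hy0]
  · rw [div_le_iff₀ (by positivity)]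
    refine le_of_mul_le_mul_right ?_ hxy
    calc |x - y| * (x + y) = |a - b| * (a + b) := hprod.symm
      _ ≤ |a - b| * (2 * √3 * (x + y)) := by gcongr
      _ = |a - b| * (2 * √3) * (x + y) := by ring

theorem stmt_4 (k l n m : ℕ) (hlk : l ≥ k) (hln : l ≥ n) :
    |ω3 k l n - ω3 k m n| ≥ Real.pi * |(l : ℝ) - (m : ℝ)| / (2 * Real.sqrt 3) := by
  have hω : ∀ j : ℕ, ω3 k j n = π * √(((k : ℝ) ^ 2 + (n : ℝ) ^ 2) + (j : ℝ) ^ 2) := by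
    intro j
    rw [ω3, add_right_comm]
  have hc : (k : ℝ) ^ 2 + (n : ℝ) ^ 2 ≤ 2 * ((l : ℝ) + m) ^ 2 := by
    have hk : (k : ℝ) ≤ l + m := by norm_cast; omega
    have hn : (n : ℝ) ≤ l + m := by norm_cast; omega
    nlinarith
  have key := abs_sub_div_le_abs_sqrt_add_sq_sub (by positivity) (Nat.cast_nonneg l)
    (Nat.cast_nonneg m) hc
  rw [hω, hω, ← mul_sub, abs_mul, abs_of_pos pi_pos, mul_div_assoc]
  exact mul_le_mul_of_nonneg_left key pi_pos.le
end

section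
/- Let B, T > 0 and suppose for fixed k, l with l ≥ k (not both zero) the sequence (h_m) satisfies |h_m| ≤ 1 for all m ≥ 0. Then |η̂(2Tω_{k,l})/η̂(0)·h_l + Σ_{m≠l} [η̂(T(ω_{k,l}−ω_{k,m})) + η̂(T(ω_{k,l}+ω_{k,m}))]/η̂(0)·h_m| ≤ (B/(η̂(0)·T²π²))·(2 + 17π²/6), given |η̂(ξ)| ≤ B/(1+ξ²) for all ξ and η̂(0) > 0. In particular, dividing through, each entry e_{k,l} of A(H) satisfies |e_{k,l}| ≤ B(12+17π²)/(6T²π²) when η̂(0) = 1. -/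
open Real

theorem hasSum_one_div_nat_add_one_sq :
    HasSum (fun n : ℕ => 1 / ((n : ℝ) + 1) ^ 2) (π ^ 2 / 6) := by
  have h := (hasSum_nat_add_iff' (f := fun n : ℕ => 1 / (n : ℝ) ^ 2) 1).2 hasSum_zeta_two
  simpa using h

theorem hasSum_int_one_div_sq : HasSum (fun n : ℤ => 1 / (n : ℝ) ^ 2) (π ^ 2 / 3) := by
  have h := HasSum.of_add_one_of_neg_add_one (f := fun n : ℤ => 1 / (n : ℝ) ^ 2)
    (by simpa using hasSum_one_div_nat_add_one_sq)
    (by convert hasSum_one_div_nat_add_one_sq using 2 with n; push_cast; ring)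
  convert h using 1
  norm_num
  ring

theorem summable_and_tsum_one_div_sq_sub_le (l : ℕ) :
    Summable (fun m : ℕ => 1 / ((l : ℝ) - m) ^ 2) ∧
      ∑' m : ℕ, 1 / ((l : ℝ) - m) ^ 2 ≤ π ^ 2 / 3 := by
  have hinj : Function.Injective fun m : ℕ => (l : ℤ) - m := fun a b hab => by simpa using hab
  have hcomp : (fun m : ℕ => 1 / ((l : ℝ) - m) ^ 2) =
      (fun n : ℤ => 1 / (n : ℝ) ^ 2) ∘ fun m : ℕ => (l : ℤ) - m := by
    ext m; simp
  rw [hcomp]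
  exact ⟨hasSum_int_one_div_sq.summable.comp_injective hinj,
    (tsum_comp_le_tsum_of_inj hasSum_int_one_div_sq.summable (fun n => by positivity) hinj).trans_eq
      hasSum_int_one_div_sq.tsum_eq⟩

theorem sq_sub_le_eight_mul_sq_sqrt_sub {k l m : ℝ} (hk : 0 ≤ k) (hkl : k ≤ l)
    (hm : 0 ≤ m) :
    (l - m) ^ 2 ≤ 8 * (√(k ^ 2 + l ^ 2) - √(k ^ 2 + m ^ 2)) ^ 2 := by
  set a := √(k ^ 2 + l ^ 2)
  set b := √(k ^ 2 + m ^ 2)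
  have ha : a ^ 2 = k ^ 2 + l ^ 2 := sq_sqrt (by positivity)
  have hb : b ^ 2 = k ^ 2 + m ^ 2 := sq_sqrt (by positivity)
  have ha_le : a ≤ 3 / 2 * l := sqrt_le_iff.2 ⟨by linarith, by nlinarith⟩
  have hb_le : b ≤ k + m := sqrt_le_iff.2 ⟨by linarith, by nlinarith⟩
  have hsum : (a + b) ^ 2 ≤ 8 * (l + m) ^ 2 := by
    nlinarith [sqrt_nonneg (k ^ 2 + l ^ 2), sqrt_nonneg (k ^ 2 + m ^ 2)]
  have hprod : (l - m) ^ 2 * (l + m) ^ 2 = (a - b) ^ 2 * (a + b) ^ 2 := by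
    rw [← mul_pow, ← mul_pow]; congr 1; linear_combination hb - ha
  rcases (by linarith : 0 ≤ l + m).eq_or_lt with h0 | hpos
  · nlinarith
  · refine le_of_mul_le_mul_right ?_ (pow_pos hpos 2)
    calc (l - m) ^ 2 * (l + m) ^ 2 = (a - b) ^ 2 * (a + b) ^ 2 := hprod
      _ ≤ (a - b) ^ 2 * (8 * (l + m) ^ 2) := by gcongr
      _ = _ := by ring

theorem pi_mul_le_ω (k m : ℕ) : π * m ≤ ω k m := by
  unfold ω
  gcongr
  exact le_sqrt_of_sq_le (by nlinarith)

theorem pi_le_ω {k l : ℕ} (hl : 1 ≤ l) : π ≤ ω k l := by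
  have h : π * 1 ≤ π * l := by gcongr; exact_mod_cast hl
  linarith [pi_mul_le_ω k l]

theorem pi_mul_add_one_le_ω_add_ω {k l : ℕ} (hl : 1 ≤ l) (m : ℕ) :
    π * (m + 1) ≤ ω k l + ω k m := by
  linarith [pi_le_ω (k := k) hl, pi_mul_le_ω k m]

theorem sq_sub_le_eight_mul_sq_ω_sub {k l : ℕ} (hkl : k ≤ l) (m : ℕ) :
    π ^ 2 * ((l : ℝ) - m) ^ 2 ≤ 8 * (ω k l - ω k m) ^ 2 := by
  have h := sq_sub_le_eight_mul_sq_sqrt_sub (Nat.cast_nonneg k) (Nat.cast_le.2 hkl)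
    (Nat.cast_nonneg m)
  calc π ^ 2 * ((l : ℝ) - m) ^ 2
        ≤ π ^ 2 * (8 * (√((k : ℝ) ^ 2 + l ^ 2) - √((k : ℝ) ^ 2 + m ^ 2)) ^ 2) := by
          gcongr
    _ = 8 * (ω k l - ω k m) ^ 2 := by unfold ω; ring

theorem abs_le_div_of_decay {f : ℝ → ℝ} {B a ξ : ℝ} (hB : 0 ≤ B)
    (hdecay : |f ξ| ≤ B / (1 + ξ ^ 2)) (ha : 0 < a) (haξ : a ≤ ξ ^ 2) : |f ξ| ≤ B / a :=
  hdecay.trans (div_le_div_of_nonneg_left hB ha (by linarith))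

section Decay

variable {B T : ℝ} {ηhat : ℝ → ℝ} (hB : 0 ≤ B) (hT : 0 < T)
  (hdecay : ∀ ξ : ℝ, |ηhat ξ| ≤ B / (1 + ξ ^ 2))
include hB hT hdecay

theorem abs_ηhat_two_mul_ω_le {k l : ℕ} (hl : 1 ≤ l) :
    |ηhat (2 * T * ω k l)| ≤ B / (T ^ 2 * π ^ 2) := by
  refine abs_le_div_of_decay hB (hdecay _) (by positivity) ?_
  have h := pi_le_ω (k := k) hl
  calc T ^ 2 * π ^ 2 ≤ T ^ 2 * ω k l ^ 2 := by gcongr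
    _ ≤ 4 * T ^ 2 * ω k l ^ 2 := by nlinarith [sq_nonneg (T * ω k l)]
    _ = (2 * T * ω k l) ^ 2 := by ring

theorem abs_ηhat_ω_sub_le {k l m : ℕ} (hkl : k ≤ l) (hm : m ≠ l) :
    |ηhat (T * (ω k l - ω k m))| ≤ B / (T ^ 2 * π ^ 2) * (8 / ((l : ℝ) - m) ^ 2) := by
  have hlm : (l : ℝ) - m ≠ 0 := sub_ne_zero.2 (Nat.cast_injective.ne (Ne.symm hm))
  refine (abs_le_div_of_decay (a := T ^ 2 * π ^ 2 * ((l : ℝ) - m) ^ 2 / 8) hB (hdecay _)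
    (by positivity) ?_).trans_eq (by field_simp)
  have h := sq_sub_le_eight_mul_sq_ω_sub hkl m
  calc T ^ 2 * π ^ 2 * ((l : ℝ) - m) ^ 2 / 8 ≤ T ^ 2 * (ω k l - ω k m) ^ 2 := by nlinarith
    _ = (T * (ω k l - ω k m)) ^ 2 := by ring

theorem abs_ηhat_ω_add_le {k l : ℕ} (hl : 1 ≤ l) (m : ℕ) :
    |ηhat (T * (ω k l + ω k m))| ≤ B / (T ^ 2 * π ^ 2) * (1 / ((m : ℝ) + 1) ^ 2) := by
  refine (abs_le_div_of_decay (a := T ^ 2 * (π * ((m : ℝ) + 1)) ^ 2) hB (hdecay _)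
    (by positivity) ?_).trans_eq (by field_simp)
  have h := pi_mul_add_one_le_ω_add_ω (k := k) hl m
  rw [mul_pow T]
  gcongr

theorem abs_tsum_offDiag_le {k l : ℕ} (hkl : k ≤ l) (hl : 1 ≤ l) {h : ℕ → ℝ}
    (hh : ∀ m, |h m| ≤ 1) :
    |∑' m : ℕ, (if m = l then 0 else
        (ηhat (T * (ω k l - ω k m)) + ηhat (T * (ω k l + ω k m))) * h m)| ≤
      B / (T ^ 2 * π ^ 2) * (17 * π ^ 2 / 6) := by
  set c := B / (T ^ 2 * π ^ 2)
  obtain ⟨hsummable, htsum⟩ := summable_and_tsum_one_div_sq_sub_le l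
  have hmajorant :
      HasSum (fun m : ℕ => c * (8 / ((l : ℝ) - m) ^ 2) + c * (1 / ((m : ℝ) + 1) ^ 2))
      (c * (8 * ∑' m : ℕ, 1 / ((l : ℝ) - m) ^ 2) + c * (π ^ 2 / 6)) := by
    refine HasSum.add (HasSum.mul_left c ?_) (hasSum_one_div_nat_add_one_sq.mul_left c)
    simpa only [mul_one_div] using hsummable.hasSum.mul_left 8
  rw [← Real.norm_eq_abs]
  refine (tsum_of_norm_bounded hmajorant fun m => ?_).trans ?_
  · rw [Real.norm_eq_abs]
    split_ifs with hm
    · simp only [abs_zero]; positivity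
    · calc |(ηhat (T * (ω k l - ω k m)) + ηhat (T * (ω k l + ω k m))) * h m|
          ≤ (|ηhat (T * (ω k l - ω k m))| + |ηhat (T * (ω k l + ω k m))|) * 1 := by
            rw [abs_mul]; gcongr; exacts [abs_add_le _ _, hh m]
        _ ≤ _ := by
            rw [mul_one]
            exact add_le_add (abs_ηhat_ω_sub_le hB hT hdecay hkl hm)
              (abs_ηhat_ω_add_le hB hT hdecay hl m)
  · have hc : 0 ≤ c := by positivity
    nlinarith

end Decay

theorem stmt_9 (B T : ℝ) (hB : 0 < B) (hT : 0 < T) (ηhat : ℝ → ℝ)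
    (hdecay : ∀ ξ : ℝ, |ηhat ξ| ≤ B / (1 + ξ^2)) (hη0 : ηhat 0 = 1)
    (k l : ℕ) (hlk : l ≥ k) (hkl : ¬(k = 0 ∧ l = 0))
    (h : ℕ → ℝ) (hh : ∀ m : ℕ, |h m| ≤ 1) :
    |ηhat (2 * T * ω k l) / ηhat 0 * h l +
        ∑' m : ℕ, (if m = l then 0 else
          (ηhat (T * (ω k l - ω k m)) + ηhat (T * (ω k l + ω k m))) / ηhat 0 * h m)| ≤
      B / (ηhat 0 * T^2 * Real.pi^2) * (2 + 17 * Real.pi^2 / 6) := by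
  have hl : 1 ≤ l := by omega
  simp only [hη0, div_one, one_mul]
  have hdiag : |ηhat (2 * T * ω k l) * h l| ≤ B / (T ^ 2 * π ^ 2) := by
    rw [abs_mul]
    simpa using mul_le_mul (abs_ηhat_two_mul_ω_le hB.le hT hdecay hl) (hh l) (abs_nonneg _)
      (by positivity)
  have hoff := abs_tsum_offDiag_le hB.le hT hdecay hlk hl hh
  have hc : 0 ≤ B / (T ^ 2 * π ^ 2) := by positivity
  calc _ ≤ _ := abs_add_le _ _
    _ ≤ _ := add_le_add hdiag hoff
    _ ≤ _ := by nlinarith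
end

section
/- For nonnegative integers k, l, n, m with l ≥ k, l ≥ n and m < l, the 3D eigenfrequencies ω_{k,l,n} = π√(k²+l²+n²) satisfy |ω_{k,l,n} − ω_{k,m,n}| ≥ π|l−m|/(2√3). -/
open Real

theorem sub_div_two_sqrt_le_sqrt_sub {a b c : ℝ} (hb : 0 ≤ b) (hba : b ≤ a) (hac : a ≤ c) :
    (a - b) / (2 * √c) ≤ √a - √b := by
  have hsqrt_ba : √b ≤ √a := sqrt_le_sqrt hba
  have hsqrt_ac : √a ≤ √c := sqrt_le_sqrt hac
  refine div_le_of_le_mul₀ (by positivity) (sub_nonneg.mpr hsqrt_ba) ?_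
  calc a - b = (√a - √b) * (√a + √b) := by
        rw [mul_comm, ← sq_sub_sq, sq_sqrt (hb.trans hba), sq_sqrt hb]
    _ ≤ (√a - √b) * (2 * √c) := by
        gcongr
        linarith

theorem sub_div_two_sqrt_three_le_sqrt_sub {k l m n : ℝ} (hkl : k ^ 2 ≤ l ^ 2)
    (hnl : n ^ 2 ≤ l ^ 2) (hm : 0 ≤ m) (hml : m < l) :
    (l - m) / (2 * √3) ≤ √(k ^ 2 + l ^ 2 + n ^ 2) - √(k ^ 2 + m ^ 2 + n ^ 2) := by
  have hl : 0 < l := hm.trans_lt hml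
  have hmono : k ^ 2 + m ^ 2 + n ^ 2 ≤ k ^ 2 + l ^ 2 + n ^ 2 := by gcongr
  have hbound : k ^ 2 + l ^ 2 + n ^ 2 ≤ 3 * l ^ 2 := by linarith
  have key := sub_div_two_sqrt_le_sqrt_sub (by positivity) hmono hbound
  rw [sqrt_mul (by norm_num), sqrt_sq hl.le] at key
  calc (l - m) / (2 * √3) ≤ (l ^ 2 - m ^ 2) / (2 * (√3 * l)) := by
        rw [div_le_div_iff₀ (by positivity) (by positivity)]
        have : 0 ≤ (l - m) * m * √3 := by
          have := sub_nonneg.mpr hml.le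
          positivity
        nlinarith
    _ = (k ^ 2 + l ^ 2 + n ^ 2 - (k ^ 2 + m ^ 2 + n ^ 2)) / (2 * (√3 * l)) := by ring
    _ ≤ _ := key

theorem stmt_19 (k l n m : ℕ) (hlk : l ≥ k) (hln : l ≥ n) (hml : m < l) :
    |ω3 k l n - ω3 k m n| ≥ Real.pi * |(l : ℝ) - (m : ℝ)| / (2 * Real.sqrt 3) := by
  have hml' : (m : ℝ) < l := by exact_mod_cast hml
  have key := sub_div_two_sqrt_three_le_sqrt_sub (k := k) (n := n)
    (pow_le_pow_left₀ (Nat.cast_nonneg _) (by exact_mod_cast hlk) 2)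
    (pow_le_pow_left₀ (Nat.cast_nonneg _) (by exact_mod_cast hln) 2) (Nat.cast_nonneg m) hml'
  have hdiff_nonneg : 0 ≤ √((k : ℝ) ^ 2 + l ^ 2 + n ^ 2) - √((k : ℝ) ^ 2 + m ^ 2 + n ^ 2) :=
    le_trans (by have := sub_pos.mpr hml'; positivity) key
  rw [ω3, ω3, ← mul_sub, abs_of_nonneg (mul_nonneg pi_pos.le hdiff_nonneg),
    abs_of_pos (sub_pos.mpr hml'), mul_div_assoc]
  exact mul_le_mul_of_nonneg_left key pi_pos.le
end
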